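/- Let s, s' ∈ S and let s = u_0 → u_1 → ⋯ → u_k = s' be any finite path of feasible BDM transitions with actions α_1,…,α_k. If #I = #{1 ≤ i ≤ k : α_i = I} and #N_< = #{1 ≤ i ≤ k : α_i = N_<}, then K(s') − K(s) = #I − #N_<. In particular, for any path starting at the initial state s_0, K(s') = #I − #N_<. -/

import Mathlib

open scoped Classical ENNReal
open Filter

namespace BDM

/-- Augmented BDM state set `S̄`: batteries `b 1, …, b M` (entries outside `{1,…,M}`
are fixed to `0`), drain `d`, time residue `T`, ministep `t ∈ {1,…,M+1}`, and the
invariant `d + T + ∑ b_m = 0`. -/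
structure St (M : ℕ) where
  b : ℕ → ℤ
  d : ℤ
  T : ℤ
  t : ℕ
  ht1 : 1 ≤ t
  ht2 : t ≤ M + 1
  hb0 : ∀ m, m = 0 ∨ M < m → b m = 0
  inv : d + T + ∑ m ∈ Finset.range M, b (m + 1) = 0

/-- Membership in the (restricted) state set `S`: `0 ≤ T ≤ M`. -/
def inS {M : ℕ} (s : St M) : Prop := 0 ≤ s.T ∧ s.T ≤ (M : ℤ)

/-- The initial state `s₀ = (0,…,0,0;0,M+1)`. -/
def init (M : ℕ) : St M where
  b := fun _ => 0
  d := 0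
  T := 0
  t := M + 1
  ht1 := Nat.le_add_left 1 M
  ht2 := le_refl _
  hb0 := fun _ _ => rfl
  inv := by simp

/-- The six actions of the BDM. -/
inductive Act : Type
  | D | I | Ne | Nl | dm | bp
deriving DecidableEq

/-- Feasible transitions of the BDM. -/
def Step {M : ℕ} (s : St M) : Act → St M → Prop
  | .D, s' => s.t ≤ M ∧ s.d < s.b s.t ∧ s'.t = s.t + 1 ∧ s'.T = s.T ∧
      s'.d = s.b s.t ∧ s'.b = Function.update s.b s.t s.d
  | .I, s' => s.t ≤ M ∧ s.d < s.b s.t ∧ s'.t = s.t + 1 ∧ s'.T = s.T ∧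
      s'.d = s.d ∧ s'.b = s.b
  | .Ne, s' => s.t ≤ M ∧ s.b s.t = s.d ∧ s'.t = s.t + 1 ∧ s'.T = s.T ∧
      s'.d = s.d ∧ s'.b = s.b
  | .Nl, s' => s.t ≤ M ∧ s.b s.t < s.d ∧ s'.t = s.t + 1 ∧ s'.T = s.T ∧
      s'.d = s.d ∧ s'.b = s.b
  | .dm, s' => s.t = M + 1 ∧ s.T < M ∧ s'.t = 1 ∧ s'.T = s.T + 1 ∧
      s'.d = s.d - 1 ∧ s'.b = s.b
  | .bp, s' => s.t = M + 1 ∧ s.T = M ∧ s'.t = 1 ∧ s'.T = 0 ∧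
      s'.d = s.d ∧ s'.b = fun m => if 1 ≤ m ∧ m ≤ M then s.b m + 1 else 0

/-- The `(M+1)`-tuple `(b_1,…,b_{t−1},d,b_t,…,b_M)` as a list. -/
def tuple {M : ℕ} (s : St M) : List ℤ :=
  ((List.range M).map (fun m => s.b (m + 1))).insertIdx (s.t - 1) s.d

/-- One transposition of adjacent entries of a list. -/
def AdjSwap (l l' : List ℤ) : Prop :=
  ∃ l₁ x y l₂, l = l₁ ++ x :: y :: l₂ ∧ l' = l₁ ++ y :: x :: l₂

/-- The set of numbers `n` such that `l` can be sorted into nonincreasing order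
by `n` transpositions of adjacent entries. -/
def SortCost (l : List ℤ) : Set ℕ :=
  {n | ∃ f : ℕ → List ℤ, f 0 = l ∧ (∀ i < n, AdjSwap (f i) (f (i + 1))) ∧
        (f n).Pairwise (· ≥ ·)}

/-- `π_l`: the minimal number of adjacent transpositions needed to sort `l`
into nonincreasing order. -/
noncomputable def piMin (l : List ℤ) : ℕ := sInf (SortCost l)

/-- The nonincreasing rearrangement of a list. -/
def sortedTuple (l : List ℤ) : List ℤ := l.insertionSort (· ≥ ·)

/-- The class `K(s) = −π_s + M·T + 2·∑_{m=1}^{M+1} b̃_m·(M+1−m)`. -/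
noncomputable def Kc {M : ℕ} (s : St M) : ℤ :=
  -(piMin (tuple s) : ℤ) + (M : ℤ) * s.T +
    2 * ∑ i ∈ Finset.range (M + 1), (sortedTuple (tuple s)).getD i 0 * ((M : ℤ) - i)

/-- The transition matrix `𝒯(s,s')` of the BDM, with values in `ℝ≥0∞`. -/
noncomputable def Tmat (M q : ℕ) (s s' : St M) : ℝ≥0∞ :=
  if Step s .D s' then ((q : ℝ≥0∞) - 1) / q
  else if Step s .I s' then 1 / q
  else if (Step s .Ne s' ∨ Step s .Nl s' ∨ Step s .dm s' ∨ Step s .bp s') then 1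
  else 0

/-- The state set `S` as a subtype. -/
def SS (M : ℕ) : Type := {s : St M // inS s}

/-- The mass distributions `μ_τ` on `S`: `μ_0` is the point mass at `s₀` and
`μ_{τ+1}(s') = ∑_{s∈S} 𝒯(s,s')·μ_τ(s)`. -/
noncomputable def mu (M q : ℕ) : ℕ → SS M → ℝ≥0∞
  | 0, s => if s.1 = init M then 1 else 0
  | τ + 1, s' => ∑' s : SS M, Tmat M q s.1 s'.1 * mu M q τ s

/-- The asymptotic measure `μ_∞(s) = limsup_{τ→∞} μ_τ(s)`. -/
noncomputable def muInf (M q : ℕ) (s : SS M) : ℝ≥0∞ :=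
  Filter.atTop.limsup (fun τ => mu M q τ s)

end BDM

namespace BDMAux

/-- Number of inversions (pairs out of nonincreasing order). -/
def inv2 : List ℤ → ℕ
  | [] => 0
  | a :: l => l.countP (fun x => decide (a < x)) + inv2 l

def cross (l₁ l₂ : List ℤ) : ℕ :=
  (l₁.map (fun a => l₂.countP (fun x => decide (a < x)))).sum

lemma inv2_append (l₁ l₂ : List ℤ) :
    inv2 (l₁ ++ l₂) = inv2 l₁ + inv2 l₂ + cross l₁ l₂ := by
  induction l₁ with
  | nil => simp [inv2, cross]
  | cons a l ih =>
    simp only [List.cons_append, inv2, List.append_eq, List.countP_append, cross, List.map_cons, List.sum_cons,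
      ih]
    omega

lemma cross_swap (A : List ℤ) (x y : ℤ) (B : List ℤ) :
    cross A (x :: y :: B) = cross A (y :: x :: B) := by
  unfold cross
  congr 1
  apply List.map_congr_left
  intro a _
  simp only [List.countP_cons]
  omega

lemma inv2_swap (A : List ℤ) (x y : ℤ) (B : List ℤ) :
    inv2 (A ++ y :: x :: B) + (if x < y then 1 else 0)
      = inv2 (A ++ x :: y :: B) + (if y < x then 1 else 0) := by
  rw [inv2_append, inv2_append, cross_swap]
  simp only [inv2, List.countP_cons]
  split_ifs <;> simp_all <;> omega

lemma inv2_eq_zero_of_sorted : ∀ {l : List ℤ}, l.Pairwise (· ≥ ·) → inv2 l = 0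
  | [], _ => rfl
  | a :: l, h => by
    rw [List.pairwise_cons] at h
    simp only [inv2, inv2_eq_zero_of_sorted h.2, add_zero]
    rw [List.countP_eq_zero]
    intro x hx
    simpa using not_lt.mpr (h.1 x hx)

lemma sorted_of_inv2_eq_zero : ∀ {l : List ℤ}, inv2 l = 0 → l.Pairwise (· ≥ ·)
  | [], _ => by simp
  | a :: l, h => by
    simp only [inv2, Nat.add_eq_zero] at h
    rw [List.pairwise_cons]
    refine ⟨fun x hx => ?_, sorted_of_inv2_eq_zero h.2⟩
    have := List.countP_eq_zero.mp h.1 x hx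
    simpa using this

lemma exists_swap_of_not_sorted :
    ∀ (l : List ℤ), l.Pairwise (· ≥ ·) ∨ ∃ A x y B, l = A ++ x :: y :: B ∧ x < y
  | [] => Or.inl (by simp)
  | [a] => Or.inl (by simp)
  | a :: b :: l => by
    rcases lt_or_ge a b with h | h
    · exact Or.inr ⟨[], a, b, l, rfl, h⟩
    rcases exists_swap_of_not_sorted (b :: l) with hs | ⟨A, x, y, B, hl, hxy⟩
    · left
      rw [List.pairwise_cons]
      refine ⟨fun c hc => ?_, hs⟩
      rcases List.mem_cons.mp hc with rfl | hc
      · exact h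
      · exact le_trans ((List.pairwise_cons.mp hs).1 c hc) h
    · exact Or.inr ⟨a :: A, x, y, B, by rw [hl]; rfl, hxy⟩

open BDM in
lemma inv2_mem_sortCost : ∀ (n : ℕ) (l : List ℤ), inv2 l = n → n ∈ BDM.SortCost l := by
  intro n
  induction n with
  | zero =>
    intro l h
    exact ⟨fun _ => l, rfl, fun i hi => absurd hi (Nat.not_lt_zero i),
      sorted_of_inv2_eq_zero h⟩
  | succ n ih =>
    intro l h
    rcases exists_swap_of_not_sorted l with hs | ⟨A, x, y, B, rfl, hxy⟩
    · rw [inv2_eq_zero_of_sorted hs] at h; omega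
    · have h1 : inv2 (A ++ y :: x :: B) = n := by
        have hsw := inv2_swap A x y B
        rw [if_pos hxy, if_neg (not_lt.mpr hxy.le)] at hsw
        omega
      rcases ih _ h1 with ⟨f, hf0, hfs, hfn⟩
      refine ⟨fun i => if i = 0 then A ++ x :: y :: B else f (i - 1), by simp, ?_, by
        simp only [Nat.succ_ne_zero, if_neg, Nat.add_sub_cancel]; simpa using hfn⟩
      intro i hi
      rcases Nat.eq_zero_or_pos i with rfl | hpos
      · simpa [hf0] using ⟨A, x, y, B, rfl, rfl⟩
      · have h2 : i ≠ 0 := hpos.ne'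
        have h3 : i + 1 ≠ 0 := by omega
        simp only [if_neg h2, if_neg h3]
        have : i - 1 < n := by omega
        have := hfs (i - 1) this
        have he : i - 1 + 1 = i := by omega
        rwa [he] at this

open BDM in
lemma adjSwap_le {l l' : List ℤ} (h : BDM.AdjSwap l l') : inv2 l ≤ inv2 l' + 1 := by
  obtain ⟨A, x, y, B, rfl, rfl⟩ := h
  have := inv2_swap A x y B
  split_ifs at this <;> omega

open BDM in
lemma piMin_eq_inv2 (l : List ℤ) : BDM.piMin l = inv2 l := by
  have hmem : inv2 l ∈ BDM.SortCost l := inv2_mem_sortCost _ l rfl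
  refine le_antisymm (Nat.sInf_le hmem) ?_
  apply le_csInf ⟨_, hmem⟩
  rintro n ⟨f, hf0, hfs, hfn⟩
  have key : ∀ m, (∀ i < m, BDM.AdjSwap (f i) (f (i + 1))) → inv2 (f 0) ≤ inv2 (f m) + m := by
    intro m
    induction m with
    | zero => simp
    | succ m ih =>
      intro hm
      have h1 := ih (fun i hi => hm i (by omega))
      have h2 := adjSwap_le (hm m (by omega))
      omega
  have := key n hfs
  rw [hf0, inv2_eq_zero_of_sorted hfn] at this
  omega

def psum : List ℤ → ℤ
  | [] => 0
  | a :: l => (l.map (fun x => min a x)).sum + psum l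

lemma psum_perm : ∀ {l l' : List ℤ}, l.Perm l' → psum l = psum l' := by
  intro l l' h
  induction h with
  | nil => rfl
  | cons a h ih => simp only [psum, ih, (h.map (fun x => min a x)).sum_eq]
  | swap a b l =>
    simp only [psum, List.map_cons, List.sum_cons]
    rw [min_comm]
    ring
  | trans _ _ ih1 ih2 => exact ih1.trans ih2

lemma map_min_sum_of_ge {a : ℤ} {l : List ℤ} (h : ∀ x ∈ l, x ≤ a) :
    (l.map (fun x => min a x)).sum = l.sum := by
  induction l with
  | nil => rfl
  | cons b l ih =>
    simp only [List.map_cons, List.sum_cons]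
    rw [min_eq_right (h b (by simp)), ih (fun x hx => h x (by simp [hx]))]

lemma sorted_weight : ∀ (l : List ℤ), l.Pairwise (· ≥ ·) → ∀ c : ℤ,
    (∑ i ∈ Finset.range l.length, l.getD i 0 * (c - i)) = c * l.sum - psum l := by
  intro l
  induction l with
  | nil => simp [psum]
  | cons a l ih =>
    intro hs c
    have hs' := List.pairwise_cons.mp hs
    rw [List.length_cons, Finset.sum_range_succ']
    have hcongr : (∑ i ∈ Finset.range l.length, (a :: l).getD (i + 1) 0 * (c - (↑(i + 1) : ℤ)))
        = ∑ i ∈ Finset.range l.length, l.getD i 0 * ((c - 1) - (i : ℤ)) := by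
      refine Finset.sum_congr rfl (fun i _ => ?_)
      rw [List.getD_cons_succ]
      push_cast
      ring
    rw [hcongr, ih hs'.2 (c - 1)]
    have h2 : ((l.map (fun x => min a x)).sum) = l.sum := map_min_sum_of_ge hs'.1
    simp only [List.getD_cons_zero, List.sum_cons, psum, h2]
    push_cast
    ring

open BDM

lemma insertIdx_eq : ∀ (n : ℕ) (l : List ℤ) (a : ℤ), n ≤ l.length →
    l.insertIdx n a = l.take n ++ a :: l.drop n
  | 0, l, a, _ => by simp
  | n + 1, [], a, h => by simp at h
  | n + 1, b :: l, a, h => by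
    rw [List.insertIdx_succ_cons, insertIdx_eq n l a (by simpa using h)]
    simp

lemma take_succ_getElem (L : List ℤ) (n : ℕ) (h : n < L.length) :
    L.take (n + 1) = L.take n ++ [L[n]] := by
  rw [List.take_succ, List.getElem?_eq_getElem h]
  rfl

lemma tuple_mid {M : ℕ} (s : St M) (h : s.t ≤ M) :
    tuple s = (((List.range M).map (fun m => s.b (m + 1))).take (s.t - 1))
      ++ s.d :: s.b s.t
      :: (((List.range M).map (fun m => s.b (m + 1))).drop s.t) := by
  have ht1 := s.ht1
  have hL : (((List.range M).map (fun m => s.b (m + 1)))).length = M := by simp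
  have e1 : s.t - 1 + 1 = s.t := by omega
  unfold tuple
  rw [insertIdx_eq _ _ _ (by rw [hL]; omega)]
  congr 1
  rw [List.drop_eq_getElem_cons (by rw [hL]; omega : s.t - 1 < _), List.getElem_map,
    List.getElem_range, e1]

lemma tuple_top {M : ℕ} (s : St M) (h : s.t = M + 1) :
    tuple s = ((List.range M).map (fun m => s.b (m + 1))) ++ [s.d] := by
  have := List.insertIdx_length_self (l := (List.range M).map (fun m => s.b (m + 1))) (x := s.d)
  unfold tuple
  rw [h]
  simpa using this

lemma tuple_one {M : ℕ} (s : St M) (h : s.t = 1) :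
    tuple s = s.d :: ((List.range M).map (fun m => s.b (m + 1))) := by
  unfold tuple
  rw [h]
  simp

lemma tuple_length {M : ℕ} (s : St M) : (tuple s).length = M + 1 := by
  have h2 := s.ht2
  unfold tuple
  rw [List.length_insertIdx, if_pos (by simp only [List.length_map, List.length_range]; omega)]
  simp

lemma Kc_eq {M : ℕ} (s : St M) :
    Kc s = -(inv2 (tuple s) : ℤ) + (M : ℤ) * s.T
      + 2 * ((M : ℤ) * (tuple s).sum - psum (tuple s)) := by
  unfold Kc
  rw [piMin_eq_inv2]
  congr 1
  have hsorted : (sortedTuple (tuple s)).Pairwise (· ≥ ·) :=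
    List.pairwise_insertionSort _ _
  have hperm : (sortedTuple (tuple s)).Perm (tuple s) := List.perm_insertionSort _ _
  have hlen2 : (sortedTuple (tuple s)).length = M + 1 := by
    rw [hperm.length_eq, tuple_length]
  have hw := sorted_weight (sortedTuple (tuple s)) hsorted M
  rw [hlen2] at hw
  rw [hw, hperm.sum_eq, psum_perm hperm]

lemma map_range_update {M t : ℕ} (b : ℕ → ℤ) (d : ℤ) (h1 : 1 ≤ t) (h2 : t ≤ M) :
    (List.range M).map (fun m => Function.update b t d (m + 1))
      = ((List.range M).map (fun m => b (m + 1))).take (t - 1)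
        ++ d :: ((List.range M).map (fun m => b (m + 1))).drop t := by
  have hL : (((List.range M).map (fun m => b (m + 1)))).length = M := by simp
  have hlt : (((List.range M).map (fun m => b (m + 1))).take (t - 1)).length = t - 1 := by
    simp only [List.length_take, hL]
    omega
  apply List.ext_getElem
  · simp only [List.length_map, List.length_range, List.length_append, List.length_cons,
      List.length_drop, hlt, hL]
    omega
  · intro i hi1 hi2
    simp only [List.length_map, List.length_range] at hi1
    rw [List.getElem_map, List.getElem_range]
    rcases lt_trichotomy i (t - 1) with hlt' | heq | hgt
    · rw [List.getElem_append_left (by rw [hlt]; omega), List.getElem_take,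
        List.getElem_map, List.getElem_range, Function.update_of_ne (by omega)]
    · rw [List.getElem_append_right (by rw [hlt]; omega)]
      have hit : i + 1 = t := by omega
      rw [hit, Function.update_self]
      simp only [hlt, show i - (t - 1) = 0 from by omega, List.getElem_cons_zero]
    · rw [List.getElem_append_right (by rw [hlt]; omega)]
      simp only [hlt, show i - (t - 1) = (i - t) + 1 from by omega, List.getElem_cons_succ,
        List.getElem_drop, List.getElem_map, List.getElem_range,
        show t + (i - t) = i from by omega, Function.update_of_ne (by omega : i + 1 ≠ t)]

lemma cross_singleton (L : List ℤ) (d : ℤ) :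
    cross L [d] = L.countP (fun a => decide (a < d)) := by
  induction L with
  | nil => rfl
  | cons a L ih =>
    simp only [cross, List.map_cons, List.sum_cons] at ih ⊢
    rw [ih, List.countP_cons]
    simp only [List.countP_cons, List.countP_nil]
    omega

lemma inv2_snoc (L : List ℤ) (d : ℤ) :
    inv2 (L ++ [d]) = inv2 L + L.countP (fun x => decide (x < d)) := by
  rw [inv2_append, cross_singleton]
  simp [inv2]

lemma countP_compl (d : ℤ) (L : List ℤ) :
    L.countP (fun x => decide (d - 1 < x)) + L.countP (fun x => decide (x < d)) = L.length := by
  induction L with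
  | nil => rfl
  | cons a L ih =>
    simp only [List.countP_cons, List.length_cons]
    by_cases h : a < d
    · have h2 : ¬ (d - 1 < a) := by omega
      simp [h, h2] at ih ⊢
      omega
    · have h2 : d - 1 < a := by omega
      simp [h, h2] at ih ⊢
      omega

lemma inv2_map_add_one (L : List ℤ) : inv2 (L.map (fun x => x + 1)) = inv2 L := by
  induction L with
  | nil => rfl
  | cons a L ih =>
    simp only [List.map_cons, inv2, ih, List.countP_map]
    congr 1
    apply List.countP_congr
    intro x _
    simp only [Function.comp]
    constructor <;> (intro hx; simp at hx ⊢; omega)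

lemma psum_snoc (L : List ℤ) (d : ℤ) :
    psum (L ++ [d]) = (L.map (fun x => min d x)).sum + psum L := by
  rw [psum_perm (List.perm_append_singleton d L)]
  rfl

lemma min_shift_sum (d : ℤ) (L : List ℤ) :
    (L.map (fun x => min d x)).sum
      = (L.map (fun x => min (d - 1) x)).sum + L.length
        - L.countP (fun x => decide (x < d)) := by
  induction L with
  | nil => simp
  | cons a L ih =>
    simp only [List.map_cons, List.sum_cons, List.countP_cons, List.length_cons]
    rcases lt_or_ge a d with h | h
    · rw [min_eq_right h.le, min_eq_right (by omega : a ≤ d - 1)]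
      simp only [show decide (a < d) = true from by simp [h], if_true]
      push_cast
      omega
    · rw [min_eq_left h, min_eq_left (by omega : d - 1 ≤ a)]
      simp only [show decide (a < d) = false from by simp; omega, if_false]
      push_cast
      omega

lemma min_shift_sum2 (d : ℤ) (L : List ℤ) :
    (L.map (fun x => min d (x + 1))).sum
      = (L.map (fun x => min d x)).sum + L.countP (fun x => decide (x < d)) := by
  induction L with
  | nil => simp
  | cons a L ih =>
    simp only [List.map_cons, List.sum_cons, List.countP_cons]
    rcases lt_or_ge a d with h | h
    · rw [min_eq_right (by omega : a + 1 ≤ d), min_eq_right h.le]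
      simp only [show decide (a < d) = true from by simp [h], if_true]
      push_cast
      omega
    · rw [min_eq_left (by omega : d ≤ a + 1), min_eq_left h]
      simp only [show decide (a < d) = false from by simp; omega, if_false]
      push_cast
      omega

lemma sum_min_succ_succ (a : ℤ) (L : List ℤ) :
    (L.map (fun x => min (a + 1) (x + 1))).sum = (L.map (fun x => min a x)).sum + L.length := by
  induction L with
  | nil => simp
  | cons b L ih =>
    simp only [List.map_cons, List.sum_cons, List.length_cons, ih]
    rw [min_add_add_right]
    push_cast
    ring

lemma sum_map_add_one (L : List ℤ) : (L.map (fun x => x + 1)).sum = L.sum + L.length := by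
  induction L with
  | nil => simp
  | cons b L ih =>
    simp only [List.map_cons, List.sum_cons, List.length_cons, ih]
    push_cast
    ring

lemma psum_map_add_one (L : List ℤ) :
    psum (L.map (fun x => x + 1)) = psum L + (L.length.choose 2 : ℤ) := by
  induction L with
  | nil => simp [psum]
  | cons a L ih =>
    simp only [List.map_cons, psum, List.map_map, List.length_cons, ih]
    have h1 : ((L.map (fun x => x + 1)).map (fun x => min (a + 1) x)).sum
        = (L.map (fun x => min a x)).sum + L.length := by
      rw [List.map_map]
      have : ((fun x => min (a + 1) x) ∘ (fun x => x + 1)) = (fun x => min (a + 1) (x + 1)) := by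
        funext x; rfl
      rw [this, sum_min_succ_succ]
    have h2 : ((L.length + 1).choose 2 : ℤ) = (L.length.choose 2 : ℤ) + L.length := by
      rw [Nat.choose_succ_succ, Nat.choose_one_right]
      push_cast
      ring
    rw [List.map_map] at h1
    rw [h1, h2]
    ring

lemma two_choose (n : ℕ) : 2 * (n.choose 2 : ℤ) = n * (n - 1) := by
  induction n with
  | zero => simp
  | succ n ih =>
    rw [Nat.choose_succ_succ, Nat.choose_one_right]
    push_cast
    push_cast at ih
    nlinarith [ih]

lemma tuple_succ {M : ℕ} (s' : St M) {t : ℕ} (h3 : s'.t = t + 1) (h : t ≤ M) :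
    tuple s' = (((List.range M).map (fun m => s'.b (m + 1))).take t)
      ++ s'.d :: (((List.range M).map (fun m => s'.b (m + 1))).drop t) := by
  unfold tuple
  rw [h3, Nat.add_sub_cancel,
    insertIdx_eq _ _ _ (by simp only [List.length_map, List.length_range]; omega)]

lemma take_eq {M : ℕ} (b : ℕ → ℤ) {t : ℕ} (h1 : 1 ≤ t) (h2 : t ≤ M) :
    ((List.range M).map (fun m => b (m + 1))).take t
      = ((List.range M).map (fun m => b (m + 1))).take (t - 1) ++ [b t] := by
  have hL : (((List.range M).map (fun m => b (m + 1)))).length = M := by simp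
  have e : t = (t - 1) + 1 := by omega
  conv_lhs => rw [e]
  rw [take_succ_getElem _ _ (by rw [hL]; omega), List.getElem_map, List.getElem_range,
    show t - 1 + 1 = t from by omega]

lemma Kc_step {M : ℕ} {s s' : St M} {a : Act} (h : Step s a s') :
    Kc s' = Kc s + (if a = Act.I then 1 else 0) - (if a = Act.Nl then 1 else 0) := by
  have ht1 := s.ht1
  cases a
  case D =>
    obtain ⟨h1, h2, h3, h4, h5, h6⟩ := h
    have key : tuple s' = tuple s := by
      rw [tuple_succ s' h3 h1, tuple_mid s h1, h5, h6,
        map_range_update s.b s.d ht1 h1]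
      rw [List.take_append, List.drop_append]
      have hlt : (((List.range M).map (fun m => s.b (m + 1))).take (s.t - 1)).length
          = s.t - 1 := by
        simp only [List.length_take, List.length_map, List.length_range]
        omega
      rw [List.take_of_length_le (by omega : (((List.range M).map (fun m => s.b (m + 1))).take (s.t - 1)).length ≤ s.t),
        List.drop_of_length_le (by omega : (((List.range M).map (fun m => s.b (m + 1))).take (s.t - 1)).length ≤ s.t),
        hlt, show s.t - (s.t - 1) = 1 from by omega]
      simp
    rw [Kc_eq, Kc_eq, key, h4, show (if (Act.D = Act.I) then (1:ℤ) else 0) = 0 from by simp, show (if (Act.D = Act.Nl) then (1:ℤ) else 0) = 0 from by simp]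
    ring
  case I =>
    obtain ⟨h1, h2, h3, h4, h5, h6⟩ := h
    have key : tuple s' = (((List.range M).map (fun m => s.b (m + 1))).take (s.t - 1))
        ++ s.b s.t :: s.d :: (((List.range M).map (fun m => s.b (m + 1))).drop s.t) := by
      rw [tuple_succ s' h3 h1, h5, h6, take_eq s.b ht1 h1]
      simp
    rw [Kc_eq, Kc_eq, key, tuple_mid s h1, h4]
    set A := ((List.range M).map (fun m => s.b (m + 1))).take (s.t - 1)
    set B := ((List.range M).map (fun m => s.b (m + 1))).drop s.t
    have hperm : (A ++ s.b s.t :: s.d :: B).Perm (A ++ s.d :: s.b s.t :: B) :=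
      List.Perm.append_left _ (List.Perm.swap s.d (s.b s.t) B)
    have hsw := inv2_swap A s.d (s.b s.t) B
    rw [if_pos h2, if_neg (not_lt.mpr h2.le)] at hsw
    have hz : (inv2 (A ++ s.b s.t :: s.d :: B) : ℤ)
        = (inv2 (A ++ s.d :: s.b s.t :: B) : ℤ) - 1 := by omega
    rw [hz, hperm.sum_eq, psum_perm hperm, show (if (Act.I = Act.I) then (1:ℤ) else 0) = 1 from by simp, show (if (Act.I = Act.Nl) then (1:ℤ) else 0) = 0 from by simp]
    ring
  case Ne =>
    obtain ⟨h1, h2, h3, h4, h5, h6⟩ := h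
    have key : tuple s' = tuple s := by
      rw [tuple_succ s' h3 h1, h5, h6, take_eq s.b ht1 h1, tuple_mid s h1, h2]
      simp
    rw [Kc_eq, Kc_eq, key, h4, show (if (Act.Ne = Act.I) then (1:ℤ) else 0) = 0 from by simp, show (if (Act.Ne = Act.Nl) then (1:ℤ) else 0) = 0 from by simp]
    ring
  case Nl =>
    obtain ⟨h1, h2, h3, h4, h5, h6⟩ := h
    have key : tuple s' = (((List.range M).map (fun m => s.b (m + 1))).take (s.t - 1))
        ++ s.b s.t :: s.d :: (((List.range M).map (fun m => s.b (m + 1))).drop s.t) := by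
      rw [tuple_succ s' h3 h1, h5, h6, take_eq s.b ht1 h1]
      simp
    rw [Kc_eq, Kc_eq, key, tuple_mid s h1, h4]
    set A := ((List.range M).map (fun m => s.b (m + 1))).take (s.t - 1)
    set B := ((List.range M).map (fun m => s.b (m + 1))).drop s.t
    have hperm : (A ++ s.b s.t :: s.d :: B).Perm (A ++ s.d :: s.b s.t :: B) :=
      List.Perm.append_left _ (List.Perm.swap s.d (s.b s.t) B)
    have hsw := inv2_swap A s.d (s.b s.t) B
    rw [if_neg (not_lt.mpr h2.le), if_pos h2] at hsw
    have hz : (inv2 (A ++ s.b s.t :: s.d :: B) : ℤ)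
        = (inv2 (A ++ s.d :: s.b s.t :: B) : ℤ) + 1 := by omega
    rw [hz, hperm.sum_eq, psum_perm hperm, show (if (Act.Nl = Act.I) then (1:ℤ) else 0) = 0 from by simp, show (if (Act.Nl = Act.Nl) then (1:ℤ) else 0) = 1 from by simp]
    ring
  case dm =>
    obtain ⟨h1, h2, h3, h4, h5, h6⟩ := h
    set L := (List.range M).map (fun m => s.b (m + 1)) with hLdef
    have hts : tuple s = L ++ [s.d] := tuple_top s h1
    have hts' : tuple s' = (s.d - 1) :: L := by
      rw [tuple_one s' h3, h5, h6]
    have hL : L.length = M := by simp [hLdef]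
    rw [Kc_eq, Kc_eq, hts, hts', h4]
    have e1 : inv2 ((s.d - 1) :: L)
        = L.countP (fun x => decide (s.d - 1 < x)) + inv2 L := rfl
    have e2 : psum ((s.d - 1) :: L)
        = (L.map (fun x => min (s.d - 1) x)).sum + psum L := rfl
    rw [e1, e2, inv2_snoc, psum_snoc, List.sum_cons, List.sum_append, List.sum_cons,
      List.sum_nil]
    have hc := countP_compl s.d L
    rw [hL] at hc
    have hm := min_shift_sum s.d L
    rw [hL] at hm
    rw [show (if (Act.dm = Act.I) then (1:ℤ) else 0) = 0 from by simp, show (if (Act.dm = Act.Nl) then (1:ℤ) else 0) = 0 from by simp]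
    push_cast
    push_cast at hc hm
    linarith [hc, hm]
  case bp =>
    obtain ⟨h1, h2, h3, h4, h5, h6⟩ := h
    set L := (List.range M).map (fun m => s.b (m + 1)) with hLdef
    have hts : tuple s = L ++ [s.d] := tuple_top s h1
    have hL : L.length = M := by simp [hLdef]
    have hmap : (List.range M).map (fun m => s'.b (m + 1)) = L.map (fun x => x + 1) := by
      rw [h6, hLdef, List.map_map]
      apply List.map_congr_left
      intro m hm
      rw [List.mem_range] at hm
      simp only [Function.comp]
      rw [if_pos ⟨by omega, by omega⟩]
    have hts' : tuple s' = s.d :: L.map (fun x => x + 1) := by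
      rw [tuple_one s' h3, h5, hmap]
    rw [Kc_eq, Kc_eq, hts, hts', h4, h2]
    have e1 : inv2 (s.d :: L.map (fun x => x + 1))
        = (L.map (fun x => x + 1)).countP (fun x => decide (s.d < x))
          + inv2 (L.map (fun x => x + 1)) := rfl
    have e2 : psum (s.d :: L.map (fun x => x + 1))
        = ((L.map (fun x => x + 1)).map (fun x => min s.d x)).sum
          + psum (L.map (fun x => x + 1)) := rfl
    have e3 : (L.map (fun x => x + 1)).countP (fun x => decide (s.d < x))
        = L.countP (fun x => decide (s.d - 1 < x)) := by
      rw [List.countP_map]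
      apply List.countP_congr
      intro x _
      simp only [Function.comp]
      constructor <;> (intro hx; simp at hx ⊢; omega)
    have e4 : ((L.map (fun x => x + 1)).map (fun x => min s.d x)).sum
        = (L.map (fun x => min s.d (x + 1))).sum := by
      rw [List.map_map]
      rfl
    rw [e1, e2, e3, e4, inv2_map_add_one, psum_map_add_one, min_shift_sum2,
      inv2_snoc, psum_snoc, List.sum_cons, List.sum_append, List.sum_cons, List.sum_nil,
      sum_map_add_one]
    have hc := countP_compl s.d L
    rw [hL] at hc
    have htc := two_choose M
    rw [hL]
    rw [show (if (Act.bp = Act.I) then (1:ℤ) else 0) = 0 from by simp, show (if (Act.bp = Act.Nl) then (1:ℤ) else 0) = 0 from by simp]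
    push_cast
    push_cast at hc htc
    linarith [hc, htc]

lemma inv2_replicate_zero : ∀ n, inv2 (List.replicate n (0 : ℤ)) = 0
  | 0 => rfl
  | n + 1 => by
    rw [List.replicate_succ]
    show List.countP _ (List.replicate n (0:ℤ)) + inv2 (List.replicate n (0:ℤ)) = 0
    rw [inv2_replicate_zero n, List.countP_eq_zero.mpr]
    intro x hx
    rw [List.eq_of_mem_replicate hx]
    simp

lemma psum_replicate_zero : ∀ n, psum (List.replicate n (0 : ℤ)) = 0
  | 0 => rfl
  | n + 1 => by
    rw [List.replicate_succ]
    show ((List.replicate n (0:ℤ)).map (fun x => min 0 x)).sum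
      + psum (List.replicate n (0:ℤ)) = 0
    rw [psum_replicate_zero n, List.map_replicate]
    simp

lemma Kc_init (M : ℕ) : Kc (init M) = 0 := by
  have ht : tuple (init M) = List.replicate (M + 1) 0 := by
    rw [tuple_top (init M) rfl]
    show ((List.range M).map fun _ => (0 : ℤ)) ++ [(0 : ℤ)] = _
    rw [List.map_const', List.length_range, ← List.replicate_succ']
  rw [Kc_eq, ht, inv2_replicate_zero, psum_replicate_zero]
  show -(0 : ℤ) + (M : ℤ) * (0 : ℤ) + 2 * ((M : ℤ) * (List.replicate (M+1) (0:ℤ)).sum - 0) = 0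
  rw [List.sum_replicate]
  simp

end BDMAux


open BDM in
/-- Along any finite path `s = u_0 → ⋯ → u_k = s'` of feasible BDM
transitions with actions `α_1,…,α_k` (here `α i` is the action from `u i` to
`u (i+1)`), `K(s') − K(s) = #I − #N_<`; in particular, for a path starting at
the initial state `s₀`, `K(s') = #I − #N_<`. -/
theorem bdm_class_eq_count_I_sub_count_Nl (M q : ℕ) (hM : 1 ≤ M) (hq : 2 ≤ q)
    (k : ℕ) (u : ℕ → St M) (α : ℕ → Act)
    (hmem : ∀ i ≤ k, inS (u i))
    (hstep : ∀ i < k, Step (u i) (α i) (u (i + 1))) :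
    Kc (u k) - Kc (u 0)
        = (((Finset.range k).filter (fun i => α i = Act.I)).card : ℤ)
          - (((Finset.range k).filter (fun i => α i = Act.Nl)).card : ℤ)
      ∧ (u 0 = init M →
          Kc (u k)
            = (((Finset.range k).filter (fun i => α i = Act.I)).card : ℤ)
              - (((Finset.range k).filter (fun i => α i = Act.Nl)).card : ℤ)) := by
  classical
  have main : ∀ n, (∀ i < n, Step (u i) (α i) (u (i + 1))) →
      Kc (u n) - Kc (u 0)
        = (((Finset.range n).filter (fun i => α i = Act.I)).card : ℤ)
          - (((Finset.range n).filter (fun i => α i = Act.Nl)).card : ℤ) := by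
    intro n
    induction n with
    | zero => intro _; simp
    | succ n ih =>
      intro h
      have hk := BDMAux.Kc_step (h n (by omega))
      have ih' := ih (fun i hi => h i (by omega))
      rw [Finset.range_add_one, Finset.filter_insert, Finset.filter_insert]
      have hm1 : n ∉ (Finset.range n).filter (fun i => α i = Act.I) := by
        simp
      have hm2 : n ∉ (Finset.range n).filter (fun i => α i = Act.Nl) := by
        simp
      split_ifs with hI hNl hNl
      · rw [hI] at hNl; exact absurd hNl (by simp)
      · rw [Finset.card_insert_of_notMem hm1]
        rw [if_pos hI, if_neg hNl] at hk
        push_cast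
        linarith [ih', hk]
      · rw [Finset.card_insert_of_notMem hm2]
        rw [if_neg hI, if_pos hNl] at hk
        push_cast
        linarith [ih', hk]
      · rw [if_neg hI, if_neg hNl] at hk
        push_cast
        linarith [ih', hk]
  have h1 := main k hstep
  refine ⟨h1, fun h0 => ?_⟩
  rw [h0, BDMAux.Kc_init] at h1
  linarith [h1]
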